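/- arXiv:1904.10532 — 9 statements merged into one kernel-verified Lean document; each statement's English description precedes it below -/
import Mathlib

section
/- A split quaternion q = q₀ + q₁i + q₂j + q₃k ∈ ℍₛ is idempotent (q² = q) if and only if q = 0, or q = 1, or q₀ = 1/2 and 1/4 + q₁² − q₂² − q₃² = 0. -/
open Quaternion

/-- The split quaternions: `ℍ[ℝ, -1, 1]`. -/
abbrev SplitQuaternion : Type := ℍ[ℝ, -1, 1]

/-!
Every quaternion satisfies its characteristic equation `q² = t q - n` with trace
`t = q + q̄` and norm `n = q q̄`, both scalars. Hence `q² = q` means `(t - 1) q = n`: if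
`t ≠ 1` then `q` is a scalar idempotent, i.e. `0` or `1`; if `t = 1` it means `n = 0`.
For split quaternions `t = 2 q₀` and `n = q₀² + q₁² - q₂² - q₃²`.
-/

namespace QuaternionAlgebra

section CommRing

variable {R : Type*} [CommRing R] {c₁ c₂ c₃ : R}

theorem sq_eq_trace_mul_sub_norm (a : ℍ[R, c₁, c₂, c₃]) :
    a ^ 2 = ↑(2 * a.re + c₂ * a.imI) * a - ↑(a * star a).re := by
  rw [← self_add_star', ← mul_star_eq_coe, add_mul, star_comm_self', sq, add_sub_cancel_right]

theorem re_mul_star (a : ℍ[R, c₁, c₂, c₃]) :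
    (a * star a).re = a.re ^ 2 + c₂ * a.re * a.imI - c₁ * a.imI ^ 2 - c₃ * a.imJ ^ 2
      - c₂ * c₃ * a.imJ * a.imK + c₁ * c₃ * a.imK ^ 2 := by
  simp only [re_mul, re_star, imI_star, imJ_star, imK_star]
  ring

end CommRing

section Field

variable {K : Type*} [Field K] {c₁ c₂ c₃ : K}

theorem sq_eq_self_iff (a : ℍ[K, c₁, c₂, c₃]) :
    a ^ 2 = a ↔ a = 0 ∨ a = 1 ∨ (2 * a.re + c₂ * a.imI = 1 ∧ (a * star a).re = 0) := by
  set t := 2 * a.re + c₂ * a.imI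
  set n := (a * star a).re
  have hsq : a ^ 2 - a = ↑(t - 1) * a - ↑n := by
    rw [sq_eq_trace_mul_sub_norm, coe_sub, coe_one, sub_mul, one_mul]
    abel
  by_cases ht : t = 1
  · have ha0 : a ≠ 0 := by rintro rfl; simp [t] at ht
    have ha1 : a ≠ 1 := by
      rintro rfl
      have h2 : (2 : K) = 1 := by simpa [t] using ht
      exact one_ne_zero (by linear_combination h2 : (1 : K) = 0)
    rw [← sub_eq_zero, hsq]
    simp [ht, ha0, ha1, coe_injective.eq_iff' coe_zero]
  · simp only [ht, false_and, or_false]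
    refine ⟨fun h => ?_, by rintro (rfl | rfl) <;> simp⟩
    have hlin : ↑(t - 1) * a = (n : ℍ[K, c₁, c₂, c₃]) := sub_eq_zero.mp (hsq ▸ sub_eq_zero.mpr h)
    have ha : a = ↑(n / (t - 1)) := by
      rw [div_eq_inv_mul, coe_mul, ← hlin, ← mul_assoc, ← coe_mul,
        inv_mul_cancel₀ (sub_ne_zero.mpr ht), coe_one, one_mul]
    have hr : IsIdempotentElem (n / (t - 1)) :=
      coe_injective (c₁ := c₁) (c₂ := c₂) (c₃ := c₃) (by rw [coe_mul, ← ha, ← sq, h])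
    rw [ha]
    rcases IsIdempotentElem.iff_eq_zero_or_one.mp hr with h0 | h1
    · exact Or.inl (by rw [h0, coe_zero])
    · exact Or.inr (by rw [h1, coe_one])

end Field

end QuaternionAlgebra

/-- A split quaternion `q = q₀ + q₁i + q₂j + q₃k` is idempotent (`q² = q`) if and only if
`q = 0`, or `q = 1`, or `q₀ = 1/2` and `1/4 + q₁² − q₂² − q₃² = 0`. -/
theorem split_idempotent_iff (q : SplitQuaternion) :
    q ^ 2 = q ↔
      q = 0 ∨ q = 1 ∨ (q.re = 1 / 2 ∧ 1 / 4 + q.imI ^ 2 - q.imJ ^ 2 - q.imK ^ 2 = 0) := by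
  have hre : 2 * q.re + 0 * q.imI = 1 ↔ q.re = 1 / 2 := by
    constructor <;> intro h <;> linarith
  rw [QuaternionAlgebra.sq_eq_self_iff, QuaternionAlgebra.re_mul_star, hre]
  refine or_congr_right (or_congr_right (and_congr_right fun h => ?_))
  rw [h]
  ring_nf
end

section
/- Let n ≥ 2 be an integer, r > 0 a real number, α, β ∈ [0, 2π), and let q = r·((cos α + (sin α)·i) + (cos β + (sin β)·i)·j) ∈ ℍₛ (a lightlike split quaternion). (1) If cos α > 0, or if cos α < 0 and n is odd, then (2 cos α)^{n−1} > 0 and the split quaternion w = (r/(2 cos α)^{n−1})^{1/n} · ((cos α + (sin α)·i) + (cos β + (sin β)·i)·j) (with the positive real n-th root) satisfies wⁿ = q. (2) If cos α > 0 and n is even, then also (−w)ⁿ = q. -/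
/-!
The split quaternion `u = (cos α + (sin α) i) + (cos β + (sin β) i) j` is lightlike, `u ū = 0`, so
`u² = (u + ū) u = 2 cos α · u` and hence `uⁿ = (2 cos α)ⁿ⁻¹ u`. Thus `(s u)ⁿ = r u` exactly when
`sⁿ (2 cos α)ⁿ⁻¹ = r`, which the positive real `n`-th root solves as soon as `(2 cos α)ⁿ⁻¹ > 0`.
-/

open Quaternion

/-- The imaginary unit `i` of the split quaternions. -/
def qi : SplitQuaternion := ⟨0, 1, 0, 0⟩

/-- The imaginary unit `j` of the split quaternions. -/
def qj : SplitQuaternion := ⟨0, 0, 1, 0⟩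

/-- `cos θ + (sin θ)·i ∈ ℍₛ`. -/
noncomputable def eθ (θ : ℝ) : SplitQuaternion :=
  ((Real.cos θ : ℝ) : SplitQuaternion) + (Real.sin θ : ℝ) • qi

theorem pow_succ_eq_smul_of_mul_self_eq_smul {R A : Type*} [Monoid R] [Monoid A] [MulAction R A]
    [IsScalarTower R A A] {x : A} {c : R} (h : x * x = c • x) (n : ℕ) :
    x ^ (n + 1) = c ^ n • x := by
  induction n with
  | zero => simp
  | succ n ih => rw [pow_succ, ih, smul_mul_assoc, h, smul_smul, ← pow_succ]

theorem QuaternionAlgebra.mul_self_eq_smul_of_mul_star_eq_zero {R : Type*} [CommRing R]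
    {c₁ c₂ c₃ : R} {a : ℍ[R,c₁,c₂,c₃]} (h : a * star a = 0) :
    a * a = (2 * a.re + c₂ * a.imI) • a :=
  calc a * a = a * (a + star a) - a * star a := by rw [mul_add, add_sub_cancel_right]
    _ = (2 * a.re + c₂ * a.imI) • a := by rw [self_add_star', h, sub_zero, mul_coe_eq_smul]

theorem eθ_add_eθ_mul_qj_mul_star (α β : ℝ) :
    (eθ α + eθ β * qj) * star (eθ α + eθ β * qj) = 0 := by
  have hα := Real.sin_sq_add_cos_sq α
  have hβ := Real.sin_sq_add_cos_sq β
  ext <;> simp [eθ, qi, qj] <;> linarith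

theorem eθ_add_eθ_mul_qj_pow_succ (α β : ℝ) (n : ℕ) :
    (eθ α + eθ β * qj) ^ (n + 1) = (2 * Real.cos α) ^ n • (eθ α + eθ β * qj) := by
  refine pow_succ_eq_smul_of_mul_self_eq_smul ?_ n
  rw [QuaternionAlgebra.mul_self_eq_smul_of_mul_star_eq_zero (eθ_add_eθ_mul_qj_mul_star α β)]
  simp [eθ, qi, qj]

theorem roots_of_lightlike_general (n : ℕ) (hn : 2 ≤ n) (r : ℝ) (hr : 0 < r) (α β : ℝ)
    (q w : SplitQuaternion)
    (hq : q = r • (eθ α + eθ β * qj))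
    (hw : w = ((r / (2 * Real.cos α) ^ (n - 1)) ^ ((n : ℝ)⁻¹) : ℝ) • (eθ α + eθ β * qj)) :
    ((0 < Real.cos α ∨ (Real.cos α < 0 ∧ Odd n)) →
        0 < (2 * Real.cos α) ^ (n - 1) ∧ w ^ n = q) ∧
      ((0 < Real.cos α ∧ Even n) → (-w) ^ n = q) := by
  have hroot (hpos : 0 < (2 * Real.cos α) ^ (n - 1)) : w ^ n = q := by
    obtain ⟨m, rfl⟩ : ∃ m, n = m + 1 := ⟨n - 1, by omega⟩
    rw [Nat.add_sub_cancel] at hpos hw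
    rw [hw, smul_pow, Real.rpow_inv_natCast_pow (div_pos hr hpos).le m.succ_ne_zero,
      eθ_add_eθ_mul_qj_pow_succ, smul_smul, div_mul_cancel₀ _ hpos.ne', hq]
  refine ⟨fun hcos => ?_, fun ⟨hcos, heven⟩ => ?_⟩
  · have hpos : 0 < (2 * Real.cos α) ^ (n - 1) := by
      rcases hcos with hcos | ⟨hcos, hodd⟩
      · exact pow_pos (by linarith) _
      · exact (Nat.Odd.sub_odd hodd odd_one).pow_pos (by linarith)
    exact ⟨hpos, hroot hpos⟩
  · rw [heven.neg_pow]
    exact hroot (pow_pos (by linarith) _)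

/-- Roots of a lightlike split quaternion `q = r((cos α + sin α i) + (cos β + sin β i)j)`:
if `cos α > 0`, or `cos α < 0` and `n` is odd, then `(2 cos α)^(n−1) > 0` and
`w = (r/(2 cos α)^(n−1))^(1/n) ((cos α + sin α i) + (cos β + sin β i)j)` satisfies `wⁿ = q`;
and if `cos α > 0` and `n` is even, then also `(−w)ⁿ = q`. -/
theorem roots_of_lightlike (n : ℕ) (hn : 2 ≤ n) (r : ℝ) (hr : 0 < r) (α β : ℝ)
    (hα : α ∈ Set.Ico 0 (2 * Real.pi)) (hβ : β ∈ Set.Ico 0 (2 * Real.pi))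
    (q w : SplitQuaternion)
    (hq : q = r • (eθ α + eθ β * qj))
    (hw : w = ((r / (2 * Real.cos α) ^ (n - 1)) ^ ((n : ℝ)⁻¹) : ℝ) • (eθ α + eθ β * qj)) :
    ((0 < Real.cos α ∨ (Real.cos α < 0 ∧ Odd n)) →
        0 < (2 * Real.cos α) ^ (n - 1) ∧ w ^ n = q) ∧
      ((0 < Real.cos α ∧ Even n) → (-w) ^ n = q) :=
  roots_of_lightlike_general n hn r hr α β q w hq hw
end

section
/- Let n ≥ 2 be an integer, r > 0 a real number, α, β ∈ [0, 2π), and let q = r·((cos α + (sin α)·i) + (cos β + (sin β)·i)·j) ∈ ℍₛ. If cos α = 0, or if cos α < 0 and n is even, then there exists no w ∈ ℍₛ with wⁿ = q. -/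
/-!
A split quaternion `w` satisfies `w² = 2 Re(w) w - I_w`. If `wⁿ = q` with `q` lightlike, then
`I_w = 0` by multiplicativity of `I`, so `w² = 2 Re(w) w` and `wⁿ = (2 Re w)ⁿ⁻¹ w`; in particular
`r cos α = Re q = 2ⁿ⁻¹ (Re w)ⁿ`. For even `n` this is `≥ 0`. If it vanishes then `Re w = 0`, so
`w² = 0` and `q = wⁿ = 0`, which is impossible since `r > 0`.
-/

open Quaternion

namespace QuaternionAlgebra

variable {R : Type*} [CommRing R] {c₁ c₂ : R}

/-- On `ℍ[ℝ, -1, 1]` this is the form `I_q`. -/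
def normSq : ℍ[R,c₁,c₂] →* R where
  toFun a := (a * star a).re
  map_one' := by simp
  map_mul' x y := coe_injective <| by
    conv_lhs => rw [← mul_star_eq_coe, star_mul, mul_assoc, ← mul_assoc y, y.mul_star_eq_coe,
      coe_commutes, ← mul_assoc, x.mul_star_eq_coe, ← coe_mul]

theorem self_mul_star_eq_normSq (a : ℍ[R,c₁,c₂]) : a * star a = normSq a :=
  mul_star_eq_coe a

theorem sq_eq_two_re_smul_sub_normSq (a : ℍ[R,c₁,c₂]) :
    a ^ 2 = (2 * a.re) • a - normSq a := by
  have hstar : star a = ↑(2 * a.re) - a := by simpa using star_eq_two_re_sub a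
  calc a ^ 2 = a * (↑(2 * a.re) - star a) := by rw [hstar, sub_sub_cancel, sq]
    _ = (2 * a.re) • a - normSq a := by
      rw [mul_sub, mul_coe_eq_smul, self_mul_star_eq_normSq]

variable {a : ℍ[R,c₁,c₂]}

theorem pow_succ_of_normSq_eq_zero (h : normSq a = 0) (n : ℕ) :
    a ^ (n + 1) = (2 * a.re) ^ n • a := by
  induction n with
  | zero => simp
  | succ n ih =>
    rw [pow_succ, ih, smul_mul_assoc, ← sq, sq_eq_two_re_smul_sub_normSq, h, coe_zero, sub_zero,
      smul_smul, ← pow_succ]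

theorem re_pow_succ_of_normSq_eq_zero (h : normSq a = 0) (n : ℕ) :
    (a ^ (n + 1)).re = 2 ^ n * a.re ^ (n + 1) := by
  rw [pow_succ_of_normSq_eq_zero h, re_smul, smul_eq_mul]
  ring

theorem sq_eq_zero_of_normSq_eq_zero_of_re_eq_zero (h : normSq a = 0) (hre : a.re = 0) :
    a ^ 2 = 0 := by
  simpa [hre] using pow_succ_of_normSq_eq_zero h 1

end QuaternionAlgebra

theorem SplitQuaternion.normSq_mk (a b c d : ℝ) :
    QuaternionAlgebra.normSq (⟨a, b, c, d⟩ : SplitQuaternion) = a ^ 2 + b ^ 2 - c ^ 2 - d ^ 2 := by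
  simp only [QuaternionAlgebra.normSq, MonoidHom.coe_mk, OneHom.coe_mk, QuaternionAlgebra.re_mul,
    QuaternionAlgebra.star_mk]
  ring

theorem smul_eθ_add_eθ_mul_qj (r α β : ℝ) :
    r • (eθ α + eθ β * qj) =
      ⟨r * Real.cos α, r * Real.sin α, r * Real.cos β, r * Real.sin β⟩ := by
  ext <;> simp [eθ, qi, qj]

theorem normSq_smul_eθ_add_eθ_mul_qj (r α β : ℝ) :
    QuaternionAlgebra.normSq (r • (eθ α + eθ β * qj)) = 0 := by
  rw [smul_eθ_add_eθ_mul_qj, SplitQuaternion.normSq_mk]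
  linear_combination r ^ 2 * (Real.cos_sq_add_sin_sq α - Real.cos_sq_add_sin_sq β)

theorem no_roots_of_lightlike_general (n : ℕ) (hn : 2 ≤ n) (r : ℝ) (hr : 0 < r) (α β : ℝ)
    (q : SplitQuaternion) (hq : q = r • (eθ α + eθ β * qj))
    (h : Real.cos α = 0 ∨ (Real.cos α < 0 ∧ Even n)) :
    ¬∃ w : SplitQuaternion, w ^ n = q := by
  rintro ⟨w, rfl⟩
  have hw : QuaternionAlgebra.normSq w = 0 := by
    refine (pow_eq_zero_iff (by omega : n ≠ 0)).mp ?_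
    rw [← map_pow, hq, normSq_smul_eθ_add_eθ_mul_qj]
  rw [smul_eθ_add_eθ_mul_qj] at hq
  obtain ⟨m, rfl⟩ : ∃ m, n = m + 1 := ⟨n - 1, by omega⟩
  have hre : r * Real.cos α = 2 ^ m * w.re ^ (m + 1) := by
    rw [← QuaternionAlgebra.re_pow_succ_of_normSq_eq_zero hw, hq]
  rcases h with hcos | ⟨hcos, heven⟩
  · have hwre : w.re = 0 := by simpa [hcos] using hre
    have hpow : w ^ (m + 1) = 0 := pow_eq_zero_of_le hn
      (QuaternionAlgebra.sq_eq_zero_of_normSq_eq_zero_of_re_eq_zero hw hwre)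
    have hsin : Real.sin α = 0 := by
      simpa [hpow, hr.ne'] using congrArg QuaternionAlgebra.imI hq
    simpa [hsin, hcos] using Real.sin_sq_add_cos_sq α
  · have hneg : r * Real.cos α < 0 := mul_neg_of_pos_of_neg hr hcos
    have hnonneg : 0 ≤ 2 ^ m * w.re ^ (m + 1) := mul_nonneg (by positivity) (heven.pow_nonneg _)
    linarith

/-- Nonexistence of roots of a lightlike split quaternion
`q = r((cos α + sin α i) + (cos β + sin β i)j)`: if `cos α = 0`, or `cos α < 0` and `n` is
even, then `q` has no `n`-th root in `ℍₛ`. -/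
theorem no_roots_of_lightlike (n : ℕ) (hn : 2 ≤ n) (r : ℝ) (hr : 0 < r) (α β : ℝ)
    (hα : α ∈ Set.Ico 0 (2 * Real.pi)) (hβ : β ∈ Set.Ico 0 (2 * Real.pi))
    (q : SplitQuaternion) (hq : q = r • (eθ α + eθ β * qj))
    (h : Real.cos α = 0 ∨ (Real.cos α < 0 ∧ Even n)) :
    ¬∃ w : SplitQuaternion, w ^ n = q :=
  no_roots_of_lightlike_general n hn r hr α β q hq h
end

section
/- For every a, b ∈ ℍₛ, with a⁺, b⁺ the Moore–Penrose inverses of a and b, the 4×4 real matrices L(a), R(b) satisfy the four Penrose equations: L(a)L(a⁺)L(a) = L(a), L(a⁺)L(a)L(a⁺) = L(a⁺), and L(a)L(a⁺), L(a⁺)L(a) are symmetric matrices; similarly R(b)R(b⁺)R(b) = R(b), R(b⁺)R(b)R(b⁺) = R(b⁺), and R(b)R(b⁺), R(b⁺)R(b) are symmetric. Moreover the product M = L(a)R(b) and N = L(a⁺)R(b⁺) satisfy MNM = M, NMN = N, and MN, NM are symmetric (so L(a)⁺ = L(a⁺), R(b)⁺ = R(b⁺), (L(a)R(b))⁺ =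 L(a⁺)R(b⁺) as Moore–Penrose inverses). -/
/-!
On the coordinate space of `ℍₛ`, transposition of `L(x)` and `R(x)` corresponds to the
anti-involution `flipI` negating the `i`-coordinate, so `L` (multiplicative) and `R`
(anti-multiplicative) carry Penrose pairs for `flipI` to Penrose pairs for transposition.
It thus suffices that `a⁺` is a Moore–Penrose inverse of `a` for `flipI`: for `I_a ≠ 0` it is
the two-sided inverse, and for `I_a = 0 ≠ a` one has `a · flipI a · a = 4|c₁|² a` with
`c₁ ≠ 0`, which makes `flipI a / 4|c₁|²` a Penrose inverse because `flipI` is an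
anti-involution. Finally `L(a)` and `R(b)` commute, and Penrose pairs of commuting elements
multiply.
-/

open Quaternion Matrix
open scoped Classical

/-- `I_a = a * ā = a₀² + a₁² − a₂² − a₃²`, as a real scalar. -/
def Iq (a : SplitQuaternion) : ℝ := a.re ^ 2 + a.imI ^ 2 - a.imJ ^ 2 - a.imK ^ 2

/-- The Moore–Penrose inverse of a split quaternion `a = c₁ + c₂j`: `0` if `a = 0`;
`ā / I_a` if `I_a ≠ 0`; and `(c̄₁ + c₂j)/(4|c₁|²)` if `a ≠ 0` and `I_a = 0`. -/
noncomputable def mp (a : SplitQuaternion) : SplitQuaternion :=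
  if a = 0 then 0
  else if Iq a ≠ 0 then (Iq a)⁻¹ • star a
  else (4 * (a.re ^ 2 + a.imI ^ 2))⁻¹ • (⟨a.re, -a.imI, a.imJ, a.imK⟩ : SplitQuaternion)

/-- The matrix of left multiplication by `a` on `ℍₛ` in the basis `(1, i, j, k)`. -/
def Lm (a : SplitQuaternion) : Matrix (Fin 4) (Fin 4) ℝ :=
  !![a.re, -a.imI, a.imJ, a.imK;
     a.imI, a.re, a.imK, -a.imJ;
     a.imJ, a.imK, a.re, -a.imI;
     a.imK, -a.imJ, a.imI, a.re]

/-- The matrix of right multiplication by `a` on `ℍₛ` in the basis `(1, i, j, k)`. -/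
def Rm (a : SplitQuaternion) : Matrix (Fin 4) (Fin 4) ℝ :=
  !![a.re, -a.imI, a.imJ, a.imK;
     a.imI, a.re, -a.imK, a.imJ;
     a.imJ, -a.imK, a.re, a.imI;
     a.imK, a.imJ, -a.imI, a.re]

structure IsPenroseInverse {R : Type*} [Mul R] (t : R → R) (a x : R) : Prop where
  mul_inv_mul : a * x * a = a
  inv_mul_inv : x * a * x = x
  mul_inv_symm : t (a * x) = a * x
  inv_mul_symm : t (x * a) = x * a

namespace IsPenroseInverse

variable {R S : Type*}

theorem of_mul_eq_one [MulOneClass R] {t : R → R} (ht : t 1 = 1) {a x : R} (hax : a * x = 1)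
    (hxa : x * a = 1) : IsPenroseInverse t a x :=
  ⟨by rw [hax, one_mul], by rw [hxa, one_mul], by rw [hax, ht], by rw [hxa, ht]⟩

theorem of_mul_mul_self_eq_smul {K A : Type*} [Field K] [Semiring A] [Algebra K A]
    {t : A → A} (ht_mul : ∀ x y, t (x * y) = t y * t x) (ht_invol : Function.Involutive t)
    (ht_smul : ∀ (c : K) x, t (c • x) = c • t x) {a : A} {n : K} (hn : n ≠ 0)
    (ha : a * t a * a = n • a) : IsPenroseInverse t a (n⁻¹ • t a) := by
  have hsymm : t (a * t a) = a * t a := by rw [ht_mul, ht_invol]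
  have ha' : t a * a * t a = n • t a := by
    rw [← ht_smul, ← ha, ht_mul, ht_mul, ht_invol, mul_assoc]
  refine ⟨?_, ?_, ?_, ?_⟩
  · rw [mul_smul_comm, smul_mul_assoc, ha, smul_smul, inv_mul_cancel₀ hn, one_smul]
  · rw [smul_mul_assoc, smul_mul_assoc, mul_smul_comm, ha', smul_smul, smul_smul,
      mul_assoc, inv_mul_cancel₀ hn, mul_one]
  · rw [mul_smul_comm, ht_smul, hsymm]
  · rw [smul_mul_assoc, ht_smul, ht_mul, ht_invol]

theorem map [Mul R] [Mul S] {s : R → R} {t : S → S} {a x : R} (h : IsPenroseInverse s a x)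
    (f : R → S) (hf_mul : ∀ x y, f (x * y) = f x * f y) (hf_symm : ∀ x, f (s x) = t (f x)) :
    IsPenroseInverse t (f a) (f x) := by
  refine ⟨?_, ?_, ?_, ?_⟩
  · rw [← hf_mul, ← hf_mul, h.mul_inv_mul]
  · rw [← hf_mul, ← hf_mul, h.inv_mul_inv]
  · rw [← hf_mul, ← hf_symm, h.mul_inv_symm]
  · rw [← hf_mul, ← hf_symm, h.inv_mul_symm]

theorem map_anti [Semigroup R] [Semigroup S] {s : R → R} {t : S → S} {a x : R}
    (h : IsPenroseInverse s a x) (f : R → S) (hf_mul : ∀ x y, f (x * y) = f y * f x)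
    (hf_symm : ∀ x, f (s x) = t (f x)) : IsPenroseInverse t (f a) (f x) := by
  refine ⟨?_, ?_, ?_, ?_⟩
  · rw [← hf_mul, ← hf_mul, ← mul_assoc, h.mul_inv_mul]
  · rw [← hf_mul, ← hf_mul, ← mul_assoc, h.inv_mul_inv]
  · rw [← hf_mul, ← hf_symm, h.inv_mul_symm]
  · rw [← hf_mul, ← hf_symm, h.mul_inv_symm]

theorem mul_of_commute [Monoid R] {t : R → R} (ht_mul : ∀ x y, t (x * y) = t y * t x)
    {a x b y : R} (h₁ : IsPenroseInverse t a x) (h₂ : IsPenroseInverse t b y)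
    (hab : Commute a b) (hay : Commute a y) (hxb : Commute x b) (hxy : Commute x y) :
    IsPenroseInverse t (a * b) (x * y) := by
  have hax : a * b * (x * y) = a * x * (b * y) := hxb.symm.mul_mul_mul_comm a y
  have hxa : x * y * (a * b) = x * a * (y * b) := hay.symm.mul_mul_mul_comm x b
  refine ⟨?_, ?_, ?_, ?_⟩
  · rw [hax, ((hab.symm.mul_left hay.symm).mul_mul_mul_comm _ _), h₁.mul_inv_mul,
      h₂.mul_inv_mul]
  · rw [hxa, ((hxy.symm.mul_left hxb.symm).mul_mul_mul_comm _ _), h₁.inv_mul_inv,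
      h₂.inv_mul_inv]
  · rw [hax, ht_mul, h₁.mul_inv_symm, h₂.mul_inv_symm]
    exact ((hab.symm.mul_left hay.symm).mul_right (hxb.symm.mul_left hxy.symm)).eq
  · rw [hxa, ht_mul, h₁.inv_mul_symm, h₂.inv_mul_symm]
    exact ((hxy.symm.mul_left hxb.symm).mul_right (hay.symm.mul_left hab.symm)).eq

end IsPenroseInverse

def flipI (x : SplitQuaternion) : SplitQuaternion := ⟨x.re, -x.imI, x.imJ, x.imK⟩

theorem flipI_mul (x y : SplitQuaternion) : flipI (x * y) = flipI y * flipI x := by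
  ext <;> simp [flipI] <;> ring

theorem flipI_involutive : Function.Involutive flipI := fun x => by
  ext <;> simp [flipI]

theorem flipI_smul (c : ℝ) (x : SplitQuaternion) : flipI (c • x) = c • flipI x := by
  ext <;> simp [flipI]

theorem flipI_zero : flipI 0 = 0 := by
  ext <;> simp [flipI]

theorem flipI_one : flipI 1 = 1 := by
  ext <;> simp [flipI]

theorem mul_star_eq_Iq (a : SplitQuaternion) : a * star a = Iq a • 1 := by
  ext <;> simp [Iq] <;> ring

theorem star_mul_eq_Iq (a : SplitQuaternion) : star a * a = Iq a • 1 := by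
  ext <;> simp [Iq] <;> ring

theorem mul_flipI_mul_self_of_Iq_eq_zero {a : SplitQuaternion} (hI : Iq a = 0) :
    a * flipI a * a = (4 * (a.re ^ 2 + a.imI ^ 2)) • a := by
  unfold Iq at hI
  ext <;> simp [flipI]
  · linear_combination (-3 * a.re) * hI
  · linear_combination (-3 * a.imI) * hI
  · linear_combination (-a.imJ) * hI
  · linear_combination (-a.imK) * hI

theorem eq_zero_of_Iq_eq_zero {a : SplitQuaternion} (hI : Iq a = 0)
    (h : a.re ^ 2 + a.imI ^ 2 = 0) : a = 0 := by
  unfold Iq at hI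
  have hre : a.re = 0 := by nlinarith [sq_nonneg a.re, sq_nonneg a.imI]
  have hi : a.imI = 0 := by nlinarith [sq_nonneg a.re, sq_nonneg a.imI]
  have hj : a.imJ = 0 := by nlinarith [sq_nonneg a.imJ, sq_nonneg a.imK]
  have hk : a.imK = 0 := by nlinarith [sq_nonneg a.imJ, sq_nonneg a.imK]
  ext <;> simp [hre, hi, hj, hk]

theorem mp_isPenroseInverse (a : SplitQuaternion) : IsPenroseInverse flipI a (mp a) := by
  by_cases h0 : a = 0
  · subst h0
    simp only [mp, if_true]
    exact ⟨by simp, by simp, by simp [flipI_zero], by simp [flipI_zero]⟩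
  by_cases hI : Iq a = 0
  · have hn : 4 * (a.re ^ 2 + a.imI ^ 2) ≠ 0 :=
      mul_ne_zero four_ne_zero fun h => h0 (eq_zero_of_Iq_eq_zero hI h)
    have hmp : mp a = (4 * (a.re ^ 2 + a.imI ^ 2))⁻¹ • flipI a := by
      simp [mp, h0, hI, flipI]
    rw [hmp]
    exact .of_mul_mul_self_eq_smul flipI_mul flipI_involutive flipI_smul hn
      (mul_flipI_mul_self_of_Iq_eq_zero hI)
  · have hmp : mp a = (Iq a)⁻¹ • star a := by simp [mp, h0, hI]
    refine .of_mul_eq_one flipI_one ?_ ?_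
    · rw [hmp, mul_smul_comm, mul_star_eq_Iq, smul_smul, inv_mul_cancel₀ hI, one_smul]
    · rw [hmp, smul_mul_assoc, star_mul_eq_Iq, smul_smul, inv_mul_cancel₀ hI, one_smul]

theorem Lm_mul (x y : SplitQuaternion) : Lm (x * y) = Lm x * Lm y := by
  ext i j
  fin_cases i <;> fin_cases j <;> simp [Lm, mul_apply, Fin.sum_univ_four] <;> ring

theorem Rm_mul (x y : SplitQuaternion) : Rm (x * y) = Rm y * Rm x := by
  ext i j
  fin_cases i <;> fin_cases j <;> simp [Rm, mul_apply, Fin.sum_univ_four] <;> ring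

theorem Lm_commute_Rm (x y : SplitQuaternion) : Commute (Lm x) (Rm y) := by
  ext i j
  fin_cases i <;> fin_cases j <;> simp [Lm, Rm, mul_apply, Fin.sum_univ_four] <;> ring

theorem Lm_flipI (x : SplitQuaternion) : Lm (flipI x) = (Lm x)ᵀ := by
  ext i j
  fin_cases i <;> fin_cases j <;> simp [Lm, flipI]

theorem Rm_flipI (x : SplitQuaternion) : Rm (flipI x) = (Rm x)ᵀ := by
  ext i j
  fin_cases i <;> fin_cases j <;> simp [Rm, flipI]

/-- The matrices `L(a)`, `R(b)` and `L(a)R(b)` satisfy the four Penrose equations with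
`L(a⁺)`, `R(b⁺)` and `L(a⁺)R(b⁺)` respectively; that is, `L(a)⁺ = L(a⁺)`,
`R(b)⁺ = R(b⁺)`, and `(L(a)R(b))⁺ = L(a⁺)R(b⁺)`. -/
theorem penrose_equations_Lm_Rm (a b : SplitQuaternion) :
    (Lm a * Lm (mp a) * Lm a = Lm a ∧ Lm (mp a) * Lm a * Lm (mp a) = Lm (mp a) ∧
      (Lm a * Lm (mp a))ᵀ = Lm a * Lm (mp a) ∧ (Lm (mp a) * Lm a)ᵀ = Lm (mp a) * Lm a) ∧
    (Rm b * Rm (mp b) * Rm b = Rm b ∧ Rm (mp b) * Rm b * Rm (mp b) = Rm (mp b) ∧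
      (Rm b * Rm (mp b))ᵀ = Rm b * Rm (mp b) ∧ (Rm (mp b) * Rm b)ᵀ = Rm (mp b) * Rm b) ∧
    (Lm a * Rm b * (Lm (mp a) * Rm (mp b)) * (Lm a * Rm b) = Lm a * Rm b ∧
      Lm (mp a) * Rm (mp b) * (Lm a * Rm b) * (Lm (mp a) * Rm (mp b)) =
        Lm (mp a) * Rm (mp b) ∧
      (Lm a * Rm b * (Lm (mp a) * Rm (mp b)))ᵀ = Lm a * Rm b * (Lm (mp a) * Rm (mp b)) ∧
      (Lm (mp a) * Rm (mp b) * (Lm a * Rm b))ᵀ = Lm (mp a) * Rm (mp b) * (Lm a * Rm b)) := by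
  have hL := (mp_isPenroseInverse a).map Lm Lm_mul Lm_flipI
  have hR := (mp_isPenroseInverse b).map_anti Rm Rm_mul Rm_flipI
  have hLR := hL.mul_of_commute transpose_mul hR (Lm_commute_Rm a b) (Lm_commute_Rm a (mp b))
    (Lm_commute_Rm (mp a) b) (Lm_commute_Rm (mp a) (mp b))
  exact ⟨⟨hL.1, hL.2, hL.3, hL.4⟩, ⟨hR.1, hR.2, hR.3, hR.4⟩, hLR.1, hLR.2, hLR.3, hLR.4⟩
end

section
/- Let a = c₁ + c₂j and b = u₁ + u₂j be nonzero lightlike split quaternions (c₁, c₂, u₁, u₂ ∈ ℂ, so c₁ ≠ 0 and u₁ ≠ 0), and let d ∈ ℍₛ. Then the equation a x b = d has a solution x ∈ ℍₛ if and only if (1 + (c₂/c̄₁) j) · d · (1 + (u₂/u₁) j) = 4d; and in that case the set of all solutions is exactly { c̄₁ d ū₁ / (4|c₁|²|u₁|²) + y − (1/4)(1 + (c₂/c₁) j) · y · (1 + (u₂/ū₁) j) : y ∈ ℍₛ }. -/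
/-!
For `a = c₁ + c₂j` lightlike with `c₁ ≠ 0`, the element `½ c₁⁻¹` is an inner inverse of `a`:
`a (½ c₁⁻¹) a = a`, because `a c₁⁻¹ = 1 + (c₂/c̄₁)j` and `(1 + (c₂/c̄₁)j) a = 2a` as soon as
`|c₂| = |c₁|`. The same holds for `b`. Penrose's description of the solutions of `a x b = d`
through inner inverses of `a` and `b`, valid in any ring, then gives the theorem once
`c₁⁻¹ a = 1 + (c₂/c₁)j`, `b u₁⁻¹ = 1 + (u₂/ū₁)j` and `c₁⁻¹ = c̄₁/|c₁|²` are substituted.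
-/

open Quaternion

/-- The embedding `ℂ = ℝ + ℝi ⊂ ℍₛ`. -/
def toQ (z : ℂ) : SplitQuaternion := ⟨z.re, z.im, 0, 0⟩

section Penrose

variable {R : Type*} [Ring R] {a b g h d : R}

theorem exists_mul_mul_eq_iff_of_inner_inverse (hg : a * g * a = a) (hh : b * h * b = b) :
    (∃ x, a * x * b = d) ↔ a * g * d * h * b = d := by
  constructor
  · rintro ⟨x, rfl⟩
    calc a * g * (a * x * b) * h * b = (a * g * a) * x * (b * h * b) := by noncomm_ring
      _ = a * x * b := by rw [hg, hh]
  · intro hd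
    exact ⟨g * d * h, by simpa only [mul_assoc] using hd⟩

theorem setOf_mul_mul_eq_of_inner_inverse (hg : a * g * a = a) (hh : b * h * b = b)
    (hd : a * g * d * h * b = d) :
    {x | a * x * b = d} = {x | ∃ y, x = g * d * h + y - g * a * y * b * h} := by
  ext x
  constructor
  · rintro (hx : a * x * b = d)
    refine ⟨x, ?_⟩
    rw [show g * a * x * b * h = g * d * h by rw [← hx]; noncomm_ring]
    abel
  · rintro ⟨y, rfl⟩
    calc a * (g * d * h + y - g * a * y * b * h) * b
        = a * g * d * h * b + a * y * b - (a * g * a) * y * (b * h * b) := by noncomm_ring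
      _ = d := by rw [hd, hg, hh]; abel

end Penrose

namespace SplitQuaternion

open ComplexConjugate

variable {z w : ℂ}

lemma toQ_one : toQ 1 = 1 := by
  ext <;> simp [toQ]

lemma toQ_mul (z w : ℂ) : toQ (z * w) = toQ z * toQ w := by
  ext <;> simp [toQ, mul_comm, sub_eq_add_neg]

lemma toQ_inv (z : ℂ) : toQ z⁻¹ = (‖z‖ ^ 2)⁻¹ • toQ (conj z) := by
  ext <;> simp [toQ, Complex.inv_re, Complex.inv_im, Complex.sq_norm, div_eq_inv_mul]

lemma qj_mul_toQ (z : ℂ) : qj * toQ z = toQ (conj z) * qj := by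
  ext <;> simp [toQ, qj]

lemma toQ_mul_qj_mul_add_toQ_mul_qj (t z w : ℂ) :
    toQ t * qj * (toQ z + toQ w * qj) = toQ (t * conj w) + toQ (t * conj z) * qj := by
  ext <;> simp [toQ, qj]

lemma add_toQ_mul_qj_mul_toQ_inv (hz : z ≠ 0) :
    (toQ z + toQ w * qj) * toQ z⁻¹ = 1 + toQ (w / conj z) * qj := by
  rw [add_mul, ← toQ_mul, mul_inv_cancel₀ hz, toQ_one, mul_assoc, qj_mul_toQ, ← mul_assoc,
    ← toQ_mul, map_inv₀, div_eq_mul_inv]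

lemma toQ_inv_mul_add_toQ_mul_qj (hz : z ≠ 0) :
    toQ z⁻¹ * (toQ z + toQ w * qj) = 1 + toQ (w / z) * qj := by
  rw [mul_add, ← toQ_mul, inv_mul_cancel₀ hz, toQ_one, ← mul_assoc, ← toQ_mul, inv_mul_eq_div]

lemma one_add_toQ_div_conj_mul_qj_mul_self (hz : z ≠ 0) (hzw : ‖z‖ = ‖w‖) :
    (1 + toQ (w / conj z) * qj) * (toQ z + toQ w * qj) = 2 * (toQ z + toQ w * qj) := by
  have hz' : conj z ≠ 0 := (map_ne_zero _).mpr hz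
  have hnorm : w * conj w = z * conj z := by
    rw [Complex.mul_conj', Complex.mul_conj', hzw]
  have hw : w / conj z * conj z = w := div_mul_cancel₀ w hz'
  have hwz : w / conj z * conj w = z := by
    rw [div_mul_eq_mul_div, hnorm, mul_div_assoc, div_self hz', mul_one]
  rw [add_mul, one_mul, toQ_mul_qj_mul_add_toQ_mul_qj, hw, hwz, two_mul]

lemma add_toQ_mul_qj_mul_half_inv_mul_self (hz : z ≠ 0) (hzw : ‖z‖ = ‖w‖) :
    (toQ z + toQ w * qj) * ((2⁻¹ : ℝ) • toQ z⁻¹) * (toQ z + toQ w * qj) =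
      toQ z + toQ w * qj := by
  rw [mul_smul_comm, smul_mul_assoc, add_toQ_mul_qj_mul_toQ_inv hz,
    one_add_toQ_div_conj_mul_qj_mul_self hz hzw, two_mul, ← two_smul ℝ, smul_smul,
    inv_mul_cancel₀ two_ne_zero, one_smul]

end SplitQuaternion

open SplitQuaternion

/-- For nonzero lightlike split quaternions `a = c₁ + c₂j` and `b = u₁ + u₂j`, the
equation `a x b = d` is solvable iff `(1 + (c₂/c̄₁)j) d (1 + (u₂/u₁)j) = 4d`, in which
case the solutions are exactly
`x = c̄₁ d ū₁/(4|c₁|²|u₁|²) + y − (1/4)(1 + (c₂/c₁)j) y (1 + (u₂/ū₁)j)`, `y ∈ ℍₛ`. -/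
theorem axb_eq_d_solvable (c₁ c₂ u₁ u₂ : ℂ) (hc : c₁ ≠ 0) (hu : u₁ ≠ 0)
    (hla : ‖c₁‖ = ‖c₂‖) (hlb : ‖u₁‖ = ‖u₂‖)
    (a b d : SplitQuaternion) (ha : a = toQ c₁ + toQ c₂ * qj)
    (hb : b = toQ u₁ + toQ u₂ * qj) :
    ((∃ x : SplitQuaternion, a * x * b = d) ↔
        (1 + toQ (c₂ / starRingEnd ℂ c₁) * qj) * d * (1 + toQ (u₂ / u₁) * qj) = 4 * d) ∧
      ((1 + toQ (c₂ / starRingEnd ℂ c₁) * qj) * d * (1 + toQ (u₂ / u₁) * qj) = 4 * d →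
        {x : SplitQuaternion | a * x * b = d} =
          {x : SplitQuaternion | ∃ y : SplitQuaternion,
            x = ((4 * ‖c₁‖ ^ 2 * ‖u₁‖ ^ 2)⁻¹ : ℝ) •
                  (toQ (starRingEnd ℂ c₁) * d * toQ (starRingEnd ℂ u₁)) + y -
                (1 / 4 : ℝ) •
                  ((1 + toQ (c₂ / c₁) * qj) * y * (1 + toQ (u₂ / starRingEnd ℂ u₁) * qj))}) := by
  set g : SplitQuaternion := (2⁻¹ : ℝ) • toQ c₁⁻¹
  set h : SplitQuaternion := (2⁻¹ : ℝ) • toQ u₁⁻¹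
  have hg : a * g * a = a := ha ▸ add_toQ_mul_qj_mul_half_inv_mul_self hc hla
  have hh : b * h * b = b := hb ▸ add_toQ_mul_qj_mul_half_inv_mul_self hu hlb
  have hcond : a * g * d * h * b = d ↔
      (1 + toQ (c₂ / starRingEnd ℂ c₁) * qj) * d * (1 + toQ (u₂ / u₁) * qj) = 4 * d := by
    have hE : a * toQ c₁⁻¹ = 1 + toQ (c₂ / starRingEnd ℂ c₁) * qj :=
      ha ▸ add_toQ_mul_qj_mul_toQ_inv hc
    have hF : toQ u₁⁻¹ * b = 1 + toQ (u₂ / u₁) * qj := hb ▸ toQ_inv_mul_add_toQ_mul_qj hu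
    rw [show a * g * d * h * b = (2⁻¹ * 2⁻¹ : ℝ) • (a * toQ c₁⁻¹ * d * (toQ u₁⁻¹ * b)) by
      simp only [g, h, mul_smul_comm, smul_mul_assoc, smul_smul, mul_assoc], hE, hF,
      ← mul_inv, inv_smul_eq_iff₀ (by norm_num)]
    norm_num [Algebra.smul_def]
  have hparticular : g * d * h = ((4 * ‖c₁‖ ^ 2 * ‖u₁‖ ^ 2)⁻¹ : ℝ) •
      (toQ (starRingEnd ℂ c₁) * d * toQ (starRingEnd ℂ u₁)) := by
    simp only [g, h, toQ_inv, mul_smul_comm, smul_mul_assoc, smul_smul]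
    congr 1
    ring
  have hhomogeneous : ∀ y, g * a * y * b * h = (1 / 4 : ℝ) •
      ((1 + toQ (c₂ / c₁) * qj) * y * (1 + toQ (u₂ / starRingEnd ℂ u₁) * qj)) := by
    intro y
    have hE' : toQ c₁⁻¹ * a = 1 + toQ (c₂ / c₁) * qj := ha ▸ toQ_inv_mul_add_toQ_mul_qj hc
    have hF' : b * toQ u₁⁻¹ = 1 + toQ (u₂ / starRingEnd ℂ u₁) * qj :=
      hb ▸ add_toQ_mul_qj_mul_toQ_inv hu
    rw [show g * a * y * b * h = (2⁻¹ * 2⁻¹ : ℝ) • (toQ c₁⁻¹ * a * y * (b * toQ u₁⁻¹)) by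
      simp only [g, h, mul_smul_comm, smul_mul_assoc, smul_smul, mul_assoc], hE', hF']
    norm_num
  refine ⟨(exists_mul_mul_eq_iff_of_inner_inverse hg hh).trans hcond, fun hd => ?_⟩
  rw [setOf_mul_mul_eq_of_inner_inverse hg hh (hcond.mpr hd)]
  simp only [hparticular, hhomogeneous]
end

section
/- Let a = c₁ + c₂j be a nonzero lightlike split quaternion (c₁, c₂ ∈ ℂ, c₁ ≠ 0). Then the set of solutions x ∈ ℍₛ of the equation a x = 0 is exactly { (1/2)(1 − (c₂/c₁) j) · y : y ∈ ℍₛ }. -/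
open Quaternion

/-! Writing `a = c₁ (1 + e)` with `e = (c₂/c₁) j`, lightlikeness of `a` says exactly that
`e² = |c₂/c₁|² = 1`. Since `c₁` is invertible, `a x = 0` means `e x = -x`, and then
`x = ½ (1 - e) x`; conversely `(1 + e)(1 - e) = 1 - e² = 0`. -/

theorem one_add_mul_eq_zero_iff_of_mul_self_eq_one {K A : Type*} [Field K] [NeZero (2 : K)]
    [Ring A] [Algebra K A] {e : A} (he : e * e = 1) (x : A) :
    (1 + e) * x = 0 ↔ ∃ y : A, x = (1 / 2 : K) • ((1 - e) * y) := by
  constructor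
  · intro hx
    have hex : e * x = -x := eq_neg_of_add_eq_zero_right (by rwa [add_mul, one_mul] at hx)
    refine ⟨x, ?_⟩
    rw [sub_mul, one_mul, hex, sub_neg_eq_add, smul_add, ← add_smul, add_halves, one_smul]
  · rintro ⟨y, rfl⟩
    have hproj : (1 + e) * (1 - e) = 0 := by
      rw [add_mul, one_mul, mul_sub, mul_one, he]
      abel
    rw [mul_smul_comm, ← mul_assoc, hproj, zero_mul, smul_zero]

theorem toQ_mul (z w : ℂ) : toQ (z * w) = toQ z * toQ w := by
  ext <;> simp [toQ, Complex.mul_re, Complex.mul_im]; ring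

theorem toQ_one : toQ 1 = 1 := by
  ext <;> simp [toQ]

theorem qj_mul_toQ (z : ℂ) : qj * toQ z = toQ (starRingEnd ℂ z) * qj := by
  ext <;> simp [toQ, qj]

theorem qj_mul_qj : qj * qj = 1 := by
  ext <;> simp [qj]

theorem isUnit_toQ {z : ℂ} (hz : z ≠ 0) : IsUnit (toQ z) :=
  ⟨⟨toQ z, toQ z⁻¹, by rw [← toQ_mul, mul_inv_cancel₀ hz, toQ_one],
    by rw [← toQ_mul, inv_mul_cancel₀ hz, toQ_one]⟩, rfl⟩

theorem toQ_mul_qj_mul_self {u : ℂ} (hu : ‖u‖ = 1) : toQ u * qj * (toQ u * qj) = 1 := by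
  have hconj : u * starRingEnd ℂ u = 1 := by
    rw [Complex.mul_conj, Complex.normSq_eq_norm_sq, hu]
    norm_num
  calc toQ u * qj * (toQ u * qj) = toQ u * (qj * toQ u) * qj := by noncomm_ring
    _ = toQ (u * starRingEnd ℂ u) * (qj * qj) := by
      rw [qj_mul_toQ, toQ_mul]
      noncomm_ring
    _ = 1 := by rw [hconj, toQ_one, qj_mul_qj, one_mul]

theorem toQ_add_toQ_mul_qj {c₁ : ℂ} (hc : c₁ ≠ 0) (c₂ : ℂ) :
    toQ c₁ + toQ c₂ * qj = toQ c₁ * (1 + toQ (c₂ / c₁) * qj) := by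
  rw [mul_add, mul_one, ← mul_assoc, ← toQ_mul, mul_div_cancel₀ _ hc]

/-- For a nonzero lightlike split quaternion `a = c₁ + c₂j`, the solutions of `a x = 0`
are exactly `x = (1/2)(1 − (c₂/c₁)j) y`, `y ∈ ℍₛ`. -/
theorem ax_eq_zero_solutions (c₁ c₂ : ℂ) (hc : c₁ ≠ 0)
    (hla : ‖c₁‖ = ‖c₂‖)
    (a : SplitQuaternion) (ha : a = toQ c₁ + toQ c₂ * qj) :
    {x : SplitQuaternion | a * x = 0} =
      {x : SplitQuaternion | ∃ y : SplitQuaternion,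
        x = (1 / 2 : ℝ) • ((1 - toQ (c₂ / c₁) * qj) * y)} := by
  have hu : ‖c₂ / c₁‖ = 1 := by
    rw [norm_div, ← hla, div_self (norm_ne_zero_iff.mpr hc)]
  ext x
  rw [Set.mem_ofPred_eq, Set.mem_ofPred_eq, ha, toQ_add_toQ_mul_qj hc, mul_assoc,
    (isUnit_toQ hc).mul_right_eq_zero]
  exact one_add_mul_eq_zero_iff_of_mul_self_eq_one (toQ_mul_qj_mul_self hu) x
end

section
/- Let a = c₁ + c₂j be a nonzero lightlike split quaternion (c₁, c₂ ∈ ℂ, c₁ ≠ 0) and d ∈ ℍₛ. Then the equation x a = d has a solution x ∈ ℍₛ if and only if (1/2) · d · (1 + (c₂/c₁) j) = d; and in that case the set of all solutions is exactly { d · ((c̄₁ + c₂j)/(4|c₁|²)) + (1/2) · y · (1 − (c₂/c̄₁) j) : y ∈ ℍₛ }. -/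
/-!
Put `p = ½(1 + (c₂/c₁)j)`, `b = (c̄₁ + c₂j)/(4|c₁|²)` and `q = ½(1 − (c₂/c̄₁)j)`. Multiplying
out `c₁ + c₂j` forms by `(u + vj)(u' + v'j) = (uu' + vv̄') + (uv' + vū')j`, lightlikeness
`c₂c̄₂ = c₁c̄₁` gives `a p = a`, `b a = p`, `q a = 0` and `a · c̄₁/(2|c₁|²) + q = 1`.
The first two make `d p = d` necessary for solvability and `d b` a solution when it holds; the
last two say that the left annihilator of `a` is the left ideal `ℍₛ q`, which is the set of
differences of two solutions.
-/

open Quaternion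

open ComplexConjugate

section RightDivision

variable {R : Type*} [Ring R] {a b c d p q : R}

theorem exists_mul_eq_iff_mul_eq_self (hap : a * p = a) (hba : b * a = p) :
    (∃ x, x * a = d) ↔ d * p = d := by
  constructor
  · rintro ⟨x, rfl⟩
    rw [mul_assoc, hap]
  · intro hd
    exact ⟨d * b, by rw [mul_assoc, hba, hd]⟩

theorem mul_eq_zero_iff_exists_eq_mul (hqa : q * a = 0) (hac : a * c + q = 1) {z : R} :
    z * a = 0 ↔ ∃ y, z = y * q := by
  constructor
  · intro hz
    refine ⟨z, ?_⟩
    calc z = z * a * c + z * q := by rw [mul_assoc, ← mul_add, hac, mul_one]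
      _ = z * q := by rw [hz, zero_mul, zero_add]
  · rintro ⟨y, rfl⟩
    rw [mul_assoc, hqa, mul_zero]

theorem setOf_mul_eq_eq (hba : b * a = p) (hqa : q * a = 0) (hac : a * c + q = 1)
    (hd : d * p = d) :
    {x | x * a = d} = {x | ∃ y, x = d * b + y * q} := by
  have hdb : d * b * a = d := by rw [mul_assoc, hba, hd]
  ext x
  calc x * a = d ↔ (x - d * b) * a = 0 := by rw [sub_mul, hdb, sub_eq_zero]
    _ ↔ ∃ y, x - d * b = y * q := mul_eq_zero_iff_exists_eq_mul hqa hac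
    _ ↔ ∃ y, x = d * b + y * q := by simp only [sub_eq_iff_eq_add']

end RightDivision

namespace SplitQuaternion

def ofPair (u v : ℂ) : SplitQuaternion := toQ u + toQ v * qj

theorem ofPair_inj {u v u' v' : ℂ} : ofPair u v = ofPair u' v' ↔ u = u' ∧ v = v' := by
  simp [ofPair, QuaternionAlgebra.ext_iff, Complex.ext_iff, toQ, qj, and_assoc]

theorem ofPair_mul_ofPair (u v u' v' : ℂ) :
    ofPair u v * ofPair u' v' = ofPair (u * u' + v * conj v') (u * v' + v * conj u') := by
  ext <;> simp [ofPair, toQ, qj, Complex.mul_re, Complex.mul_im] <;> ring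

theorem smul_ofPair (r : ℝ) (u v : ℂ) : r • ofPair u v = ofPair (r * u) (r * v) := by
  ext <;> simp [ofPair, toQ, qj]

theorem one_add_toQ_mul_qj (w : ℂ) : 1 + toQ w * qj = ofPair 1 w := by
  ext <;> simp [ofPair, toQ, qj]

theorem one_sub_toQ_mul_qj (w : ℂ) : 1 - toQ w * qj = ofPair 1 (-w) := by
  ext <;> simp [ofPair, toQ, qj]

theorem ofPair_add_ofPair (u v u' v' : ℂ) :
    ofPair u v + ofPair u' v' = ofPair (u + u') (v + v') := by
  ext <;> simp [ofPair, toQ, qj]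

theorem ofPair_zero_zero : ofPair 0 0 = 0 := by
  ext <;> simp [ofPair, toQ, qj]

theorem ofPair_one_zero : ofPair 1 0 = 1 := by
  ext <;> simp [ofPair, toQ, qj]

theorem toQ_eq_ofPair (z : ℂ) : toQ z = ofPair z 0 := by
  ext <;> simp [ofPair, toQ, qj]

section Lightlike

variable {c₁ c₂ : ℂ}

theorem mul_conj_eq_mul_conj_of_norm_eq (hla : ‖c₁‖ = ‖c₂‖) : c₂ * conj c₂ = c₁ * conj c₁ := by
  rw [Complex.mul_conj', Complex.mul_conj', hla]

theorem ofPair_mul_half_smul_one_add (hc : c₁ ≠ 0) (hla : ‖c₁‖ = ‖c₂‖) :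
    ofPair c₁ c₂ * ((1 / 2 : ℝ) • (1 + toQ (c₂ / c₁) * qj)) = ofPair c₁ c₂ := by
  rw [one_add_toQ_mul_qj, smul_ofPair, ofPair_mul_ofPair, ofPair_inj]
  have hc' : conj c₁ ≠ 0 := by simpa using hc
  have key := mul_conj_eq_mul_conj_of_norm_eq hla
  push_cast
  simp only [map_mul, map_div₀, map_one, map_ofNat]
  constructor
  · field_simp; linear_combination key
  · field_simp; ring

theorem smul_conj_add_mul_ofPair (hc : c₁ ≠ 0) (hla : ‖c₁‖ = ‖c₂‖) :
    ((4 * ‖c₁‖ ^ 2)⁻¹ : ℝ) • (toQ (conj c₁) + toQ c₂ * qj) * ofPair c₁ c₂ =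
      (1 / 2 : ℝ) • (1 + toQ (c₂ / c₁) * qj) := by
  rw [one_add_toQ_mul_qj, smul_mul_assoc, ← ofPair, ofPair_mul_ofPair, smul_ofPair, smul_ofPair,
    ofPair_inj]
  have hc' : conj c₁ ≠ 0 := by simpa using hc
  have key := mul_conj_eq_mul_conj_of_norm_eq hla
  push_cast
  rw [← Complex.mul_conj']
  constructor
  · field_simp; linear_combination 2 * key
  · field_simp; ring

theorem smul_one_sub_mul_ofPair (hc : c₁ ≠ 0) (hla : ‖c₁‖ = ‖c₂‖) :
    (1 / 2 : ℝ) • (1 - toQ (c₂ / conj c₁) * qj) * ofPair c₁ c₂ = 0 := by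
  rw [one_sub_toQ_mul_qj, smul_ofPair, ofPair_mul_ofPair, ← ofPair_zero_zero, ofPair_inj]
  have hc' : conj c₁ ≠ 0 := by simpa using hc
  have key := mul_conj_eq_mul_conj_of_norm_eq hla
  push_cast
  constructor
  · field_simp; linear_combination -key
  · field_simp; ring

theorem ofPair_mul_toQ_add_smul_one_sub (hc : c₁ ≠ 0) :
    ofPair c₁ c₂ * toQ (((2 * ‖c₁‖ ^ 2)⁻¹ : ℝ) * conj c₁) +
      (1 / 2 : ℝ) • (1 - toQ (c₂ / conj c₁) * qj) = 1 := by
  rw [one_sub_toQ_mul_qj, smul_ofPair, toQ_eq_ofPair, ofPair_mul_ofPair, ofPair_add_ofPair,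
    ← ofPair_one_zero, ofPair_inj]
  have hc' : conj c₁ ≠ 0 := by simpa using hc
  simp only [map_mul, Complex.conj_ofReal, Complex.conj_conj, map_zero]
  push_cast
  rw [← Complex.mul_conj']
  constructor
  · field_simp; ring
  · field_simp; ring

end Lightlike

end SplitQuaternion

open SplitQuaternion

/-- For a nonzero lightlike split quaternion `a = c₁ + c₂j`, the equation `x a = d` is
solvable iff `(1/2) d (1 + (c₂/c₁)j) = d`, in which case the solutions are exactly
`x = d ((c̄₁ + c₂j)/(4|c₁|²)) + (1/2) y (1 − (c₂/c̄₁)j)`, `y ∈ ℍₛ`. -/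
theorem xa_eq_d_solvable (c₁ c₂ : ℂ) (hc : c₁ ≠ 0)
    (hla : ‖c₁‖ = ‖c₂‖)
    (a d : SplitQuaternion) (ha : a = toQ c₁ + toQ c₂ * qj) :
    ((∃ x : SplitQuaternion, x * a = d) ↔
        (1 / 2 : ℝ) • (d * (1 + toQ (c₂ / c₁) * qj)) = d) ∧
      ((1 / 2 : ℝ) • (d * (1 + toQ (c₂ / c₁) * qj)) = d →
        {x : SplitQuaternion | x * a = d} =
          {x : SplitQuaternion | ∃ y : SplitQuaternion,
            x = ((4 * ‖c₁‖ ^ 2)⁻¹ : ℝ) •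
                  (d * (toQ (starRingEnd ℂ c₁) + toQ c₂ * qj)) +
                (1 / 2 : ℝ) • (y * (1 - toQ (c₂ / starRingEnd ℂ c₁) * qj))}) := by
  subst ha
  have hba := smul_conj_add_mul_ofPair hc hla
  simp only [← mul_smul_comm]
  exact ⟨exists_mul_eq_iff_mul_eq_self (ofPair_mul_half_smul_one_add hc hla) hba,
    setOf_mul_eq_eq hba (smul_one_sub_mul_ofPair hc hla) (ofPair_mul_toQ_add_smul_one_sub hc)⟩
end

section
/- For all split quaternions a = a₀ + a₁i + a₂j + a₃k and b = b₀ + b₁i + b₂j + b₃k, the determinant of the 4×4 real matrix T(a,b) = R(a) − L(b) equals (a₀ − b₀)⁴ − 2(a₀ − b₀)²(K(a) + K(b)) + (K(a) − K(b))², where K(q) = −q₁² + q₂² + q₃². -/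
open Quaternion Matrix

/-- `K(q) = (Im q)² = −q₁² + q₂² + q₃²`, as a real scalar. -/
def Kq (q : SplitQuaternion) : ℝ := -q.imI ^ 2 + q.imJ ^ 2 + q.imK ^ 2

theorem Matrix.det_fin_four {R : Type*} [CommRing R] (A : Matrix (Fin 4) (Fin 4) R) :
    A.det =
      A 0 0 * (A 1 1 * (A 2 2 * A 3 3 - A 2 3 * A 3 2) - A 1 2 * (A 2 1 * A 3 3 - A 2 3 * A 3 1)
          + A 1 3 * (A 2 1 * A 3 2 - A 2 2 * A 3 1))
      - A 0 1 * (A 1 0 * (A 2 2 * A 3 3 - A 2 3 * A 3 2) - A 1 2 * (A 2 0 * A 3 3 - A 2 3 * A 3 0)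
          + A 1 3 * (A 2 0 * A 3 2 - A 2 2 * A 3 0))
      + A 0 2 * (A 1 0 * (A 2 1 * A 3 3 - A 2 3 * A 3 1) - A 1 1 * (A 2 0 * A 3 3 - A 2 3 * A 3 0)
          + A 1 3 * (A 2 0 * A 3 1 - A 2 1 * A 3 0))
      - A 0 3 * (A 1 0 * (A 2 1 * A 3 2 - A 2 2 * A 3 1) - A 1 1 * (A 2 0 * A 3 2 - A 2 2 * A 3 0)
          + A 1 2 * (A 2 0 * A 3 1 - A 2 1 * A 3 0)) := by
  rw [det_succ_row_zero]
  simp only [Fin.sum_univ_four, det_fin_three, submatrix_apply, Fin.succAbove, Fin.lt_def,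
    Fin.isValue, Fin.reduceSucc, Fin.reduceCastSucc]
  norm_num
  ring

/-- `det(R(a) − L(b)) = (a₀−b₀)⁴ − 2(a₀−b₀)²(K(a)+K(b)) + (K(a)−K(b))²`. -/
theorem det_Rm_sub_Lm (a b : SplitQuaternion) :
    (Rm a - Lm b).det =
      (a.re - b.re) ^ 4 - 2 * (a.re - b.re) ^ 2 * (Kq a + Kq b) + (Kq a - Kq b) ^ 2 := by
  rw [det_fin_four]
  simp only [Rm, Lm, Kq, Matrix.sub_apply, of_apply, cons_val', cons_val_zero, cons_val_one,
    cons_val, cons_val_fin_one]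
  ring
end

section
/- Let a, b ∈ ℍₛ be non-real split quaternions with Re(a) = Re(b) and K(a) = K(b), and set c = 2(|Im a|² + |Im b|²). Then x ∈ ℍₛ satisfies x a = b x if and only if there exists y ∈ ℍₛ with x = y − (y a a' − b y a' − b' y a + b' b y)/c. -/
/-!
Write `L x = x a - b x` and `R z = z a' - b' z`. When `Re a = Re b` and `K(a) = K(b)`, a coordinate
computation gives `L ∘ R ∘ L = c • L`, and `R (L y)` is the bracketed expression of the statement.
For `c ≠ 0` the map `P = id - c⁻¹ • R ∘ L` then satisfies `L ∘ P = 0` and fixes `ker L` pointwise,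
so `ker L = range P`.
-/

open Quaternion

/-- The 'prime' of `q`: `q' = q₀ − q₁i + q₂j + q₃k`. -/
def prime (q : SplitQuaternion) : SplitQuaternion := ⟨q.re, -q.imI, q.imJ, q.imK⟩

/-- `|Im q|² = q₁² + q₂² + q₃²`. -/
def normIm (q : SplitQuaternion) : ℝ := q.imI ^ 2 + q.imJ ^ 2 + q.imK ^ 2

theorem LinearMap.ker_eq_range_id_sub_smul_comp {K M : Type*} [Field K] [AddCommGroup M]
    [Module K M] (L R : M →ₗ[K] M) {c : K} (hc : c ≠ 0) (h : L ∘ₗ R ∘ₗ L = c • L) :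
    LinearMap.ker L = LinearMap.range (LinearMap.id - c⁻¹ • R ∘ₗ L) := by
  have hP : L ∘ₗ (LinearMap.id - c⁻¹ • R ∘ₗ L) = 0 := by
    rw [LinearMap.comp_sub, LinearMap.comp_smul, h, smul_smul, inv_mul_cancel₀ hc, one_smul,
      LinearMap.comp_id, sub_self]
  apply le_antisymm
  · intro x hx
    exact ⟨x, by simp [LinearMap.mem_ker.mp hx]⟩
  · rintro _ ⟨y, rfl⟩
    exact LinearMap.mem_ker.mpr (LinearMap.congr_fun hP y)

def sylvesterMap (a b : SplitQuaternion) : SplitQuaternion →ₗ[ℝ] SplitQuaternion :=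
  LinearMap.mulRight ℝ a - LinearMap.mulLeft ℝ b

@[simp]
lemma sylvesterMap_apply (a b x : SplitQuaternion) : sylvesterMap a b x = x * a - b * x :=
  rfl

lemma normIm_nonneg (q : SplitQuaternion) : 0 ≤ normIm q := by
  unfold normIm
  positivity

lemma normIm_pos {a : SplitQuaternion} (ha : a.im ≠ 0) : 0 < normIm a := by
  obtain ⟨a₀, a₁, a₂, a₃⟩ := a
  contrapose! ha
  have h : a₁ = 0 ∧ a₂ = 0 ∧ a₃ = 0 := by
    simp only [normIm] at ha
    refine ⟨?_, ?_, ?_⟩ <;> nlinarith [sq_nonneg a₁, sq_nonneg a₂, sq_nonneg a₃]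
  obtain ⟨rfl, rfl, rfl⟩ := h
  rfl

-- Once `Re b = Re a` is substituted, every coordinate of the difference is a multiple of
-- `K(a) - K(b)`.
lemma sylvesterMap_comp_prime_comp {a b : SplitQuaternion} (hre : a.re = b.re)
    (hK : Kq a = Kq b) :
    sylvesterMap a b ∘ₗ sylvesterMap (prime a) (prime b) ∘ₗ sylvesterMap a b =
      (2 * (normIm a + normIm b)) • sylvesterMap a b := by
  obtain ⟨a₀, a₁, a₂, a₃⟩ := a
  obtain ⟨b₀, b₁, b₂, b₃⟩ := b
  dsimp only at hre
  subst hre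
  simp only [Kq] at hK
  ext ⟨y₀, y₁, y₂, y₃⟩ : 1
  ext <;> simp only [prime, normIm, LinearMap.coe_comp, Function.comp_apply, sylvesterMap_apply,
    LinearMap.smul_apply, QuaternionAlgebra.mk_mul_mk, QuaternionAlgebra.mk_sub_mk,
    QuaternionAlgebra.smul_mk, smul_eq_mul]
  · linear_combination (-(b₁ * y₁ + b₂ * y₂ + b₃ * y₃) - (a₁ * y₁ + a₂ * y₂ + a₃ * y₃)) * hK
  · linear_combination (-b₃ * y₂ + b₂ * y₃ + b₁ * y₀ + a₃ * y₂ - a₂ * y₃ + a₁ * y₀) * hK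
  · linear_combination (-b₃ * y₁ - b₂ * y₀ - b₁ * y₃ + a₃ * y₁ - a₂ * y₀ + a₁ * y₃) * hK
  · linear_combination (-b₃ * y₀ + b₂ * y₁ + b₁ * y₂ - a₃ * y₀ - a₂ * y₁ - a₁ * y₂) * hK

theorem xa_eq_bx_solutions_same_re_general (a b : SplitQuaternion) (ha : a.im ≠ 0)
    (hre : a.re = b.re) (hK : Kq a = Kq b) (c : ℝ) (hc : c = 2 * (normIm a + normIm b)) :
    ∀ x : SplitQuaternion, x * a = b * x ↔
      ∃ y : SplitQuaternion,
        x = y - c⁻¹ • (y * a * prime a - b * y * prime a - prime b * y * a +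
          prime b * b * y) := by
  have hc₀ : c ≠ 0 := by
    rw [hc]
    linarith [normIm_pos ha, normIm_nonneg b]
  have hker := LinearMap.ker_eq_range_id_sub_smul_comp (sylvesterMap a b)
    (sylvesterMap (prime a) (prime b)) hc₀ (hc ▸ sylvesterMap_comp_prime_comp hre hK)
  have hT (y : SplitQuaternion) : sylvesterMap (prime a) (prime b) (sylvesterMap a b y) =
      y * a * prime a - b * y * prime a - prime b * y * a + prime b * b * y := by
    simp only [sylvesterMap_apply]
    noncomm_ring
  intro x
  rw [← sub_eq_zero, ← sylvesterMap_apply, ← LinearMap.mem_ker, hker, LinearMap.mem_range]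
  simp only [LinearMap.sub_apply, LinearMap.id_apply, LinearMap.smul_apply, LinearMap.comp_apply,
    hT, eq_comm]

/-- For non-real `a, b ∈ ℍₛ` with `Re a = Re b` and `K(a) = K(b)`, and
`c = 2(|Im a|² + |Im b|²)`, the solutions of `x a = b x` are exactly
`x = y − (y a a' − b y a' − b' y a + b' b y)/c`, `y ∈ ℍₛ`. -/
theorem xa_eq_bx_solutions_same_re (a b : SplitQuaternion) (ha : a.im ≠ 0) (hb : b.im ≠ 0)
    (hre : a.re = b.re) (hK : Kq a = Kq b) (c : ℝ) (hc : c = 2 * (normIm a + normIm b)) :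
    ∀ x : SplitQuaternion, x * a = b * x ↔
      ∃ y : SplitQuaternion,
        x = y - c⁻¹ • (y * a * prime a - b * y * prime a - prime b * y * a +
          prime b * b * y) :=
  xa_eq_bx_solutions_same_re_general a b ha hre hK c hc
end
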